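/- arXiv:math/0405155 — 6 statements merged into one kernel-verified Lean document; each statement's English description precedes it below -/
import Mathlib

section
/- The set of regular Hasse–Schmidt derivations on the exterior algebra ⋀M (those D_t whose zeroth component D₀ is an A-automorphism of ⋀M) forms a group under composition; in particular, the formal inverse E_t of a regular Hasse–Schmidt derivation D_t is again a Hasse–Schmidt derivation. -/
noncomputable section

variable (A : Type*) [CommRing A] [IsDomain A] (M : Type*) [AddCommGroup M] [Module A M]

/-- A Hasse–Schmidt derivation on `⋀M`, given by its family of coefficients
`D_i : ⋀M → ⋀M` : the series `D_t = ∑ D_i t^i` is an `A`-algebra homomorphism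
`⋀M → (⋀M)[[t]]`, i.e. each `D_i` is `A`-linear, `D_t(α∧β) = D_t(α)∧D_t(β)`
coefficientwise, and `D_t(1) = 1`. -/
def IsHS (D : ℕ → Module.End A (ExteriorAlgebra A M)) : Prop :=
  (∀ (i : ℕ) (α β : ExteriorAlgebra A M),
      D i (α * β) = ∑ p ∈ Finset.HasAntidiagonal.antidiagonal i, D p.1 α * D p.2 β) ∧
  D 0 (1 : ExteriorAlgebra A M) = 1 ∧ (∀ i, 1 ≤ i → D i (1 : ExteriorAlgebra A M) = 0)

/-- A Hasse–Schmidt derivation is regular if its zeroth component is an automorphism. -/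
def IsReg (D : ℕ → Module.End A (ExteriorAlgebra A M)) : Prop :=
  Function.Bijective (D 0)

/-- Composition of Hasse–Schmidt derivations: the coefficients of `D_t ∘ D'_t`. -/
def compHS (D D' : ℕ → Module.End A (ExteriorAlgebra A M)) :
    ℕ → Module.End A (ExteriorAlgebra A M) :=
  fun i => ∑ p ∈ Finset.HasAntidiagonal.antidiagonal i, D p.1 ∘ₗ D' p.2

/-- The identity Hasse–Schmidt derivation (`D_t = id`). -/
def idHS : ℕ → Module.End A (ExteriorAlgebra A M) :=
  fun i => if i = 0 then LinearMap.id else 0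

/-!
Identify a family `(Dᵢ)` with the power series `∑ Dᵢ tⁱ` over the ring `End_A(⋀M)`: composition
becomes multiplication and regularity becomes invertibility of the constant coefficient, so the
regular families are the units of `End_A(⋀M)⟦t⟧`. The Hasse–Schmidt condition says that
`x ↦ D_t(x)` is a unital multiplicative map `⋀M → (⋀M)⟦t⟧`. Its `t`-linear extension to
`(⋀M)⟦t⟧` is again multiplicative, and it is injective when `D₀` is. The extension of `D_t`
composed with `E_t` is `D_t ∘ E_t`, so for the inverse `E_t` it is the constant embedding;
multiplicativity of `E_t` then follows by cancelling the extension of `D_t`.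
-/

open Finset PowerSeries

theorem sum_antidiagonal_sum_mul_sum {β : Type*} [NonUnitalNonAssocSemiring β]
    (F G : ℕ → ℕ → β) (n : ℕ) :
    ∑ mn ∈ antidiagonal n,
        (∑ cp ∈ antidiagonal mn.1, F cp.1 cp.2) * ∑ dq ∈ antidiagonal mn.2, G dq.1 dq.2 =
      ∑ ab ∈ antidiagonal n, ∑ pq ∈ antidiagonal ab.2, ∑ cd ∈ antidiagonal ab.1,
        F cd.1 pq.1 * G cd.2 pq.2 := by
  simp_rw [sum_mul_sum, ← sum_product', sum_sigma']
  -- both sides run over `c + d + p + q = n`; the bijection transposes the index array `(c p; d q)`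
  refine sum_nbij'
    (fun x => ⟨(x.2.1.1 + x.2.2.1, x.2.1.2 + x.2.2.2), (x.2.1.2, x.2.2.2), (x.2.1.1, x.2.2.1)⟩)
    (fun x => ⟨(x.2.2.1 + x.2.1.1, x.2.2.2 + x.2.1.2), (x.2.2.1, x.2.1.1), (x.2.2.2, x.2.1.2)⟩)
    ?_ ?_ ?_ ?_ ?_ <;>
  rintro ⟨⟨a, b⟩, ⟨c, d⟩, ⟨p, q⟩⟩ h <;>
  simp_all [mem_sigma, mem_product, HasAntidiagonal.mem_antidiagonal] <;> omega

section Extension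

variable {S B : Type*} [Semiring S] [Ring B] [Module S B] (D : ℕ → Module.End S B)

def hsSeries (x : B) : B⟦X⟧ :=
  mk fun i => D i x

/-- The `t`-linear extension of `D_t` to `B⟦X⟧`, sending `∑ fⱼ tʲ` to `∑ D_t(fⱼ) tʲ`. -/
def hsExtend (f : B⟦X⟧) : B⟦X⟧ :=
  mk fun n => ∑ p ∈ antidiagonal n, D p.1 (coeff p.2 f)

theorem hsExtend_C (x : B) : hsExtend D (C x) = hsSeries D x := by
  ext n
  simp only [hsExtend, hsSeries, coeff_mk, coeff_C, apply_ite (D _), map_zero]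
  rw [sum_eq_single_of_mem (n, 0) (HasAntidiagonal.mem_antidiagonal.2 (add_zero n)), if_pos rfl]
  rintro ⟨a, b⟩ hab hne
  rw [HasAntidiagonal.mem_antidiagonal] at hab
  rw [if_neg fun hb => hne (by simp only [Prod.mk.injEq]; omega)]

theorem hsExtend_one (hD : hsSeries D 1 = 1) : hsExtend D 1 = 1 := by
  rw [← map_one C, hsExtend_C, hD, map_one]

theorem hsExtend_mul (hD : ∀ x y, hsSeries D (x * y) = hsSeries D x * hsSeries D y)
    (f g : B⟦X⟧) : hsExtend D (f * g) = hsExtend D f * hsExtend D g := by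
  have hD' (i : ℕ) (x y : B) : D i (x * y) = ∑ p ∈ antidiagonal i, D p.1 x * D p.2 y := by
    simpa [hsSeries, coeff_mul] using congrArg (coeff i) (hD x y)
  ext n
  simp only [hsExtend, coeff_mk, coeff_mul, map_sum, hD']
  exact (sum_antidiagonal_sum_mul_sum (fun c p => D c (coeff p f))
    (fun d q => D d (coeff q g)) n).symm

theorem hsExtend_injective (hD : Function.Injective (D 0)) : Function.Injective (hsExtend D) := by
  intro f g hfg
  ext n
  induction n using Nat.strong_induction_on with
  | _ n ih =>
  have hn := congrArg (coeff n) hfg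
  have hmem : (0, n) ∈ antidiagonal n := HasAntidiagonal.mem_antidiagonal.2 (zero_add n)
  simp only [hsExtend, coeff_mk, ← add_sum_erase _ _ hmem] at hn
  -- the terms other than `D₀(fₙ)` only involve the coefficients `fⱼ` with `j < n`
  have hrest : ∑ p ∈ (antidiagonal n).erase (0, n), D p.1 (coeff p.2 f) =
      ∑ p ∈ (antidiagonal n).erase (0, n), D p.1 (coeff p.2 g) := by
    refine sum_congr rfl fun p hp => ?_
    rw [mem_erase, HasAntidiagonal.mem_antidiagonal, Ne, Prod.ext_iff] at hp
    rw [ih p.2 (by omega)]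
  exact hD (add_right_cancel (hrest ▸ hn))

end Extension

section ExteriorAlgebra

variable {R V : Type*} [CommRing R] [AddCommGroup V] [Module R V]

theorem isHS_iff_hsSeries {D : ℕ → Module.End R (ExteriorAlgebra R V)} :
    IsHS R V D ↔ (∀ x y, hsSeries D (x * y) = hsSeries D x * hsSeries D y) ∧
      hsSeries D 1 = 1 := by
  refine and_congr ⟨fun h x y => ext fun i => ?_, fun h i x y => ?_⟩
    ⟨fun h => ext fun i => ?_, fun h => ?_⟩
  · simpa [hsSeries, coeff_mul] using h i x y
  · simpa [hsSeries, coeff_mul] using congrArg (coeff i) (h x y)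
  · rcases Nat.eq_zero_or_pos i with rfl | hi
    · simpa [hsSeries] using h.1
    · simpa [hsSeries, hi.ne'] using h.2 i hi
  · have h' i : D i 1 = if i = 0 then 1 else 0 := by simpa [hsSeries] using congrArg (coeff i) h
    exact ⟨by simpa using h' 0, fun i hi => by simpa [show i ≠ 0 by omega] using h' i⟩

theorem hsSeries_idHS (x : ExteriorAlgebra R V) : hsSeries (idHS R V) x = C x := by
  ext i
  by_cases hi : i = 0 <;> simp [hsSeries, idHS, coeff_C, hi]

theorem hsExtend_hsSeries (D D' : ℕ → Module.End R (ExteriorAlgebra R V))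
    (x : ExteriorAlgebra R V) : hsExtend D (hsSeries D' x) = hsSeries (compHS R V D D') x := by
  ext n
  simp [hsExtend, hsSeries, compHS, LinearMap.sum_apply]

theorem mk_compHS (D D' : ℕ → Module.End R (ExteriorAlgebra R V)) :
    mk (compHS R V D D') = mk D * mk D' := by
  ext n
  simp [compHS, coeff_mul, Module.End.mul_eq_comp]

theorem mk_idHS : mk (idHS R V) = 1 := by
  ext n
  simp [idHS, coeff_one, Module.End.one_eq_id]

theorem compHS_eq_idHS_iff {D E : ℕ → Module.End R (ExteriorAlgebra R V)} :
    compHS R V D E = idHS R V ↔ mk D * mk E = 1 := by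
  rw [← mk_compHS, ← mk_idHS]
  exact ⟨congrArg mk, fun h => funext fun i => by simpa using congrArg (coeff i) h⟩

theorem isReg_iff_isUnit_mk {D : ℕ → Module.End R (ExteriorAlgebra R V)} :
    IsReg R V D ↔ IsUnit (mk D) := by
  rw [isUnit_iff_constantCoeff, constantCoeff_mk, Module.End.isUnit_iff, IsReg]

theorem isReg_compHS {D D' : ℕ → Module.End R (ExteriorAlgebra R V)} (hD : IsReg R V D)
    (hD' : IsReg R V D') : IsReg R V (compHS R V D D') := by
  rw [isReg_iff_isUnit_mk] at hD hD' ⊢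
  rw [mk_compHS]
  exact hD.mul hD'

theorem isReg_idHS : IsReg R V (idHS R V) := by
  rw [isReg_iff_isUnit_mk, mk_idHS]
  exact isUnit_one

theorem exists_isReg_compHS_eq_idHS {D : ℕ → Module.End R (ExteriorAlgebra R V)}
    (hD : IsReg R V D) :
    ∃ E, IsReg R V E ∧ compHS R V D E = idHS R V ∧ compHS R V E D = idHS R V := by
  obtain ⟨u, hu⟩ := isReg_iff_isUnit_mk.1 hD
  let E : ℕ → Module.End R (ExteriorAlgebra R V) := fun i => coeff i (↑u⁻¹ : _⟦X⟧)
  have hE : mk E = ↑u⁻¹ := ext fun i => coeff_mk _ _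
  refine ⟨E, isReg_iff_isUnit_mk.2 (hE ▸ u⁻¹.isUnit), compHS_eq_idHS_iff.2 ?_,
    compHS_eq_idHS_iff.2 ?_⟩
  · rw [hE, ← hu, u.mul_inv]
  · rw [hE, ← hu, u.inv_mul]

theorem isHS_compHS {D D' : ℕ → Module.End R (ExteriorAlgebra R V)} (hD : IsHS R V D)
    (hD' : IsHS R V D') : IsHS R V (compHS R V D D') := by
  rw [isHS_iff_hsSeries] at hD hD' ⊢
  simp only [← hsExtend_hsSeries, hD'.1, hD'.2, hsExtend_mul D hD.1, hsExtend_one D hD.2,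
    implies_true, and_self]

theorem isHS_idHS : IsHS R V (idHS R V) := by
  simp [isHS_iff_hsSeries, hsSeries_idHS]

theorem isHS_of_compHS_eq_idHS {D E : ℕ → Module.End R (ExteriorAlgebra R V)} (hD : IsHS R V D)
    (hD₀ : Function.Injective (D 0)) (hDE : compHS R V D E = idHS R V) : IsHS R V E := by
  rw [isHS_iff_hsSeries] at hD ⊢
  have hC x : hsExtend D (hsSeries E x) = C x := by
    rw [hsExtend_hsSeries, hDE, hsSeries_idHS]
  refine ⟨fun x y => hsExtend_injective D hD₀ ?_, hsExtend_injective D hD₀ ?_⟩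
  · rw [hsExtend_mul D hD.1, hC, hC, hC, map_mul]
  · rw [hC, map_one, hsExtend_one D hD.2]

end ExteriorAlgebra

/-- the regular Hasse–Schmidt derivations on `⋀M` form a group under
composition: composition of regular HS-derivations is a regular HS-derivation, the
identity is one, and every regular HS-derivation `D_t` has a two-sided formal inverse
`E_t` which is again a regular Hasse–Schmidt derivation. -/
theorem regular_hasseSchmidt_group :
    (∀ D D' : ℕ → Module.End A (ExteriorAlgebra A M),
        IsHS A M D → IsReg A M D → IsHS A M D' → IsReg A M D' →
        IsHS A M (compHS A M D D') ∧ IsReg A M (compHS A M D D')) ∧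
    (IsHS A M (idHS A M) ∧ IsReg A M (idHS A M)) ∧
    (∀ D : ℕ → Module.End A (ExteriorAlgebra A M), IsHS A M D → IsReg A M D →
        ∃ E : ℕ → Module.End A (ExteriorAlgebra A M),
          IsHS A M E ∧ IsReg A M E ∧
          compHS A M D E = idHS A M ∧ compHS A M E D = idHS A M) := by
  refine ⟨fun D D' hD hDreg hD' hD'reg => ⟨isHS_compHS hD hD', isReg_compHS hDreg hD'reg⟩,
    ⟨isHS_idHS, isReg_idHS⟩, fun D hD hDreg => ?_⟩
  obtain ⟨E, hE, hDE, hED⟩ := exists_isReg_compHS_eq_idHS hDreg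
  exact ⟨E, isHS_of_compHS_eq_idHS hD hDreg.1 hDE, hE, hDE, hED⟩

end
end

section
/- Let D_t be the Hasse–Schmidt (Schubert) derivation on ⋀M extending the shift operators D_i(ε^j) = ε^{i+j} on M = ⊕_{i≥1} ℤε^i. Then the components D_i : ⋀^k M → ⋀^k M commute pairwise: D_i D_j = D_j D_i on ⋀^k M for all i, j ≥ 0 and k ≥ 1. -/
/-!
Both sides of `D i (D j α) = D j (D i α)` are additive in `α`, so it suffices to check the
identity on scalars and on `M`, and to show that it is preserved by products. On scalars it follows
from `D₀ = id` and `D_i 1 = 0` for `i ≥ 1`; on `M` each `D_i` is the shift `ε^j ↦ ε^{i+j}`, and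
shifts commute. For a product, expanding `D i (D j (a * b))` twice by the Leibniz rule gives
`∑_{p+q=j} ∑_{r+s=i} D_r (D_p a) * D_s (D_q b)`, which becomes the expansion of `D j (D i (a * b))`
after exchanging the two sums and using the identity for `a` and `b`.
-/

open scoped Classical

noncomputable section

/-- The free ℤ-module `M = ⊕_{i ≥ 1} ℤ ε^i`; the basis vector `ε^i` (i ≥ 1) is
`Finsupp.single (i-1) 1`. -/
abbrev Mmod : Type := ℕ →₀ ℤ

def ee (i : ℕ) : Mmod := Finsupp.single (i - 1) 1

/-- The exterior algebra `⋀ M` over ℤ. -/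
abbrev EA : Type := ExteriorAlgebra ℤ Mmod

def eps (i : ℕ) : EA := ExteriorAlgebra.ι ℤ (ee i)

/-- `ε^{i₁} ∧ ⋯ ∧ ε^{i_k}`. -/
def wedge {k : ℕ} (i : Fin k → ℕ) : EA := (List.ofFn fun j => eps (i j)).prod

/-- `D` is the Schubert derivation on `⋀M`: `D₀ = id`, the generalized Leibniz rule
holds, and `D_i (ε^j) = ε^{i+j}` for `j ≥ 1`. -/
def IsSch (D : ℕ → Module.End ℤ EA) : Prop :=
  (∀ α, D 0 α = α) ∧ (∀ i, 1 ≤ i → D i (1 : EA) = 0) ∧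
  (∀ i (α β : EA), D i (α * β) = ∑ p ∈ Finset.HasAntidiagonal.antidiagonal i, D p.1 α * D p.2 β) ∧
  (∀ i j, 1 ≤ j → D i (eps j) = eps (i + j))

section Leibniz

open Finset.HasAntidiagonal

variable {R A : Type*} [Semiring R] [Semiring A] [Module R A] (D : ℕ → Module.End R A)

theorem apply_apply_mul_of_leibniz
    (hmul : ∀ i (a b : A), D i (a * b) = ∑ p ∈ antidiagonal i, D p.1 a * D p.2 b)
    (i j : ℕ) (a b : A) :
    D i (D j (a * b)) = ∑ p ∈ antidiagonal j, ∑ q ∈ antidiagonal i,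
      D q.1 (D p.1 a) * D q.2 (D p.2 b) := by
  rw [hmul, map_sum]
  exact Finset.sum_congr rfl fun p _ => hmul i _ _

theorem apply_comm_mul_of_leibniz
    (hmul : ∀ i (a b : A), D i (a * b) = ∑ p ∈ antidiagonal i, D p.1 a * D p.2 b)
    {a b : A} (ha : ∀ i j, D i (D j a) = D j (D i a)) (hb : ∀ i j, D i (D j b) = D j (D i b))
    (i j : ℕ) : D i (D j (a * b)) = D j (D i (a * b)) := by
  rw [apply_apply_mul_of_leibniz D hmul, apply_apply_mul_of_leibniz D hmul, Finset.sum_comm]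
  refine Finset.sum_congr rfl fun q _ => Finset.sum_congr rfl fun p _ => ?_
  rw [ha q.1 p.1, hb q.2 p.2]

theorem apply_comm_one_of_apply_one (h0 : ∀ a, D 0 a = a) (h1 : ∀ i, 1 ≤ i → D i (1 : A) = 0)
    (i j : ℕ) : D i (D j 1) = D j (D i 1) := by
  rcases Nat.eq_zero_or_pos i with rfl | hi
  · rw [h0, h0]
  rcases Nat.eq_zero_or_pos j with rfl | hj
  · rw [h0, h0]
  rw [h1 i hi, h1 j hj, map_zero, map_zero]

end Leibniz

/-- The shift `ε^j ↦ ε^{i+j}` of `M` (on the coordinates of `Mmod`, `n ↦ n + i`). -/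
def shift (i : ℕ) : Mmod →ₗ[ℤ] Mmod := Finsupp.lmapDomain ℤ ℤ (· + i)

theorem shift_comm (i j : ℕ) (m : Mmod) : shift i (shift j m) = shift j (shift i m) := by
  simp only [shift, Finsupp.lmapDomain_apply, ← Finsupp.mapDomain_comp]
  congr 1
  funext n
  simp only [Function.comp_apply]
  omega

theorem apply_ι_eq_ι_shift (D : ℕ → Module.End ℤ EA)
    (heps : ∀ i j, 1 ≤ j → D i (eps j) = eps (i + j)) (i : ℕ) (m : Mmod) : D i (ExteriorAlgebra.ι ℤ m) = ExteriorAlgebra.ι ℤ (shift i m) := by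
  suffices D i ∘ₗ ExteriorAlgebra.ι ℤ = ExteriorAlgebra.ι ℤ ∘ₗ shift i from
    LinearMap.congr_fun this m
  refine Finsupp.lhom_ext' fun n => LinearMap.ext_ring ?_
  have hn : i + (n + 1) - 1 = n + i := by omega
  have hεn := heps i (n + 1) (by omega)
  simp only [eps, ee, Nat.add_sub_cancel, hn] at hεn
  simp [shift, hεn]

/-- the components of the Schubert derivation commute pairwise
(in particular on each `⋀^k M`). -/
theorem schubert_derivation_components_commute
    (D : ℕ → Module.End ℤ EA) (hD : IsSch D) :
    ∀ (i j : ℕ) (α : EA), D i (D j α) = D j (D i α) := by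
  obtain ⟨h0, h1, hmul, heps⟩ := hD
  intro i j α
  induction α using ExteriorAlgebra.induction generalizing i j with
  | algebraMap r =>
    rw [Algebra.algebraMap_eq_smul_one]
    simp only [map_smul, apply_comm_one_of_apply_one D h0 h1 i j]
  | ι m => simp only [apply_ι_eq_ι_shift D heps, shift_comm]
  | mul a b ha hb => exact apply_comm_mul_of_leibniz D hmul ha hb i j
  | add a b ha hb => rw [map_add, map_add, map_add, map_add, ha, hb]

end
end

section
/- Pieri's formula for Schubert derivatives: for 1 ≤ i₁ < i₂ < ⋯ < i_k and h ≥ 0, D_h(ε^{i₁} ∧ ⋯ ∧ ε^{i_k}) = ∑ ε^{j₁} ∧ ⋯ ∧ ε^{j_k}, where the sum ranges over all sequences (j₁,…,j_k) with i₁ ≤ j₁ < i₂ ≤ j₂ < ⋯ < i_k ≤ j_k and j₁ + ⋯ + j_k = h + i₁ + ⋯ + i_k. -/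
open scoped Classical

noncomputable section

/-!
By the Leibniz rule and `D_p ε^a = ε^{a+p}`, `D_h(ε^{i₁} ∧ ⋯ ∧ ε^{i_k})` is the sum of
`ε^{j₁} ∧ ⋯ ∧ ε^{j_k}`, `j = i + c`, over all compositions `c` of `h` into `k` parts.
If `j` does not interlace with `i`, let `n` be the first position with `i_{n+1} ≤ j_n`.
Exchanging `j_n` and `j_{n+1}` gives another composition with the same first failing position;
it reverses the sign of the wedge (which vanishes when the exchange fixes `j`) and is an
involution. So the non-interlacing terms cancel in pairs.
-/

open Finset

theorem Finset.Nat.sum_antidiagonalTuple_succ {M : Type*} [AddCommMonoid M] (k n : ℕ)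
    (f : (Fin (k + 1) → ℕ) → M) :
    ∑ c ∈ Nat.antidiagonalTuple (k + 1) n, f c =
      ∑ p ∈ antidiagonal n, ∑ c ∈ Nat.antidiagonalTuple k p.2, f (Fin.cons p.1 c) := by
  simp only [Finset.sum_eq_multiset_sum, Nat.antidiagonalTuple, Multiset.Nat.antidiagonalTuple,
    List.Nat.antidiagonalTuple]
  change _ = (Multiset.map _ (Multiset.Nat.antidiagonal n)).sum
  simp only [Multiset.Nat.antidiagonal, Multiset.map_coe, Multiset.sum_coe, List.map_flatMap,
    List.map_map]
  rw [List.flatMap_def, List.sum_flatten, List.map_map]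
  rfl

theorem wedge_eq_ιMulti {k : ℕ} (j : Fin k → ℕ) :
    wedge j = ExteriorAlgebra.ιMulti ℤ k (ee ∘ j) :=
  (ExteriorAlgebra.ιMulti_apply _).symm

theorem wedge_zero (j : Fin 0 → ℕ) : wedge j = 1 := rfl

theorem wedge_succ {k : ℕ} (j : Fin (k + 1) → ℕ) : wedge j = eps (j 0) * wedge (Fin.tail j) := by
  rw [wedge, List.ofFn_succ, List.prod_cons]; rfl

theorem wedge_comp_swap {k : ℕ} (j : Fin k → ℕ) {m m' : Fin k} (h : m ≠ m') :
    wedge (j ∘ Equiv.swap m m') = -wedge j := by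
  simp only [wedge_eq_ιMulti]
  exact (ExteriorAlgebra.ιMulti ℤ k).map_swap (ee ∘ j) h

theorem wedge_eq_zero_of_eq {k : ℕ} (j : Fin k → ℕ) {m m' : Fin k} (hj : j m = j m')
    (h : m ≠ m') : wedge j = 0 := by
  rw [wedge_eq_ιMulti]
  exact AlternatingMap.map_eq_zero_of_eq _ _ (congrArg ee hj) h

section SchubertDerivation

variable {D : ℕ → Module.End ℤ EA}

theorem IsSch.apply_one (hD : IsSch D) (h : ℕ) : D h (1 : EA) = if h = 0 then 1 else 0 := by
  split_ifs with h0
  · exact h0 ▸ hD.1 1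
  · exact hD.2.1 h (by omega)

theorem IsSch.apply_eps_mul (hD : IsSch D) {a : ℕ} (ha : 1 ≤ a) (h : ℕ) (α : EA) :
    D h (eps a * α) = ∑ p ∈ antidiagonal h, eps (a + p.1) * D p.2 α := by
  rw [hD.2.2.1]
  refine sum_congr rfl fun p _ => ?_
  rw [hD.2.2.2 p.1 a ha, add_comm]

theorem IsSch.apply_wedge (hD : IsSch D) {k : ℕ} (h : ℕ) (i : Fin k → ℕ) (hi : ∀ j, 1 ≤ i j) :
    D h (wedge i) = ∑ c ∈ Nat.antidiagonalTuple k h, wedge (i + c) := by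
  induction k generalizing h with
  | zero =>
    rw [wedge_zero, hD.apply_one]
    cases h <;> simp [wedge_zero]
  | succ k ih =>
    rw [wedge_succ, hD.apply_eps_mul (hi 0), Nat.sum_antidiagonalTuple_succ]
    refine sum_congr rfl fun p _ => ?_
    rw [ih p.2 (Fin.tail i) (fun j => hi j.succ), mul_sum]
    refine sum_congr rfl fun c _ => ?_
    conv_rhs => rw [wedge_succ]
    rfl

end SchubertDerivation

section Involution

variable {k : ℕ} (i c : Fin k → ℕ)

-- `i + swapShift i c m m' = (i + c) ∘ swap m m'` once no subtraction truncates (`add_swapShift`).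
def swapShift (m m' : Fin k) : Fin k → ℕ := fun j => (i + c) (Equiv.swap m m' j) - i j

theorem swapShift_apply_of_ne {m m' j : Fin k} (hm : j ≠ m) (hm' : j ≠ m') :
    swapShift i c m m' j = c j := by
  simp [swapShift, Equiv.swap_apply_of_ne_of_ne hm hm']

variable {i c} {m m' : Fin k}

theorem add_swapShift (hm : i m ≤ i m' + c m') (hm' : i m' ≤ i m + c m) :
    i + swapShift i c m m' = (i + c) ∘ Equiv.swap m m' := by
  funext j
  simp only [swapShift, Pi.add_apply, Function.comp_apply, Equiv.swap_apply_def]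
  split_ifs <;> subst_vars <;> omega

theorem sum_swapShift (hm : i m ≤ i m' + c m') (hm' : i m' ≤ i m + c m) :
    ∑ j, swapShift i c m m' j = ∑ j, c j := by
  have := congrArg (fun f => ∑ j, f j) (add_swapShift hm hm')
  simp only [Pi.add_apply, Function.comp_apply, sum_add_distrib, Equiv.sum_comp] at this
  omega

theorem swapShift_swapShift (hm : i m ≤ i m' + c m') (hm' : i m' ≤ i m + c m) :
    swapShift i (swapShift i c m m') m m' = c := by
  funext j
  change (i + swapShift i c m m') (Equiv.swap m m' j) - i j = c j
  rw [add_swapShift hm hm', Function.comp_apply, Equiv.swap_apply_self, Pi.add_apply,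
    Nat.add_sub_cancel_left]

theorem wedge_add_swapShift (hm : i m ≤ i m' + c m') (hm' : i m' ≤ i m + c m) (h : m ≠ m') :
    wedge (i + swapShift i c m m') = -wedge (i + c) := by
  rw [add_swapShift hm hm', wedge_comp_swap _ h]

theorem wedge_eq_zero_of_swapShift_eq (hm : i m ≤ i m' + c m') (hm' : i m' ≤ i m + c m)
    (h : m ≠ m') (hfix : swapShift i c m m' = c) : wedge (i + c) = 0 := by
  have hsym := congrFun (add_swapShift hm hm') m
  rw [hfix, Function.comp_apply, Equiv.swap_apply_left] at hsym
  exact wedge_eq_zero_of_eq _ hsym h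

end Involution

section Crossing

variable {k : ℕ} (i c : Fin k → ℕ)

-- `i + c` fails to interlace with `i` at position `n` (indices are 0-based).
def CrossesAt (n : ℕ) : Prop :=
  ∃ hn : n + 1 < k, i ⟨n + 1, hn⟩ ≤ i ⟨n, by omega⟩ + c ⟨n, by omega⟩

theorem exists_crossesAt_iff :
    (∃ n, CrossesAt i c n) ↔ ¬ ∀ m m' : Fin k, (m' : ℕ) = m + 1 → i m + c m < i m' := by
  push Not
  constructor
  · rintro ⟨n, hn, hle⟩
    exact ⟨_, _, rfl, hle⟩
  · rintro ⟨⟨n, hn⟩, ⟨n', hn'⟩, hsucc, hle⟩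
    obtain rfl : n' = n + 1 := hsucc
    exact ⟨n, hn', hle⟩

def pieriSwap : Fin k → ℕ :=
  if h : ∃ n, CrossesAt i c n then
    swapShift i c ⟨Nat.find h, by have := (Nat.find_spec h).fst; omega⟩
      ⟨Nat.find h + 1, (Nat.find_spec h).fst⟩
  else c

variable {i c}

theorem pieriSwap_of_firstCrossing {n : ℕ} (hn : n + 1 < k) (hcross : CrossesAt i c n)
    (hfirst : ∀ n' < n, ¬ CrossesAt i c n') :
    pieriSwap i c = swapShift i c ⟨n, by omega⟩ ⟨n + 1, hn⟩ := by
  have h : ∃ n, CrossesAt i c n := ⟨n, hcross⟩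
  have hfind : Nat.find h = n := (Nat.find_eq_iff h).2 ⟨hcross, hfirst⟩
  simp only [pieriSwap, dif_pos h, hfind]

theorem firstCrossing_swapShift (hmono : StrictMono i) {n : ℕ} (hn : n + 1 < k)
    (hfirst : ∀ n' < n, ¬ CrossesAt i c n') :
    CrossesAt i (swapShift i c ⟨n, by omega⟩ ⟨n + 1, hn⟩) n ∧
      ∀ n' < n, ¬ CrossesAt i (swapShift i c ⟨n, by omega⟩ ⟨n + 1, hn⟩) n' := by
  refine ⟨⟨hn, ?_⟩, fun n' hn' ⟨hn'k, hle⟩ => hfirst n' hn' ⟨hn'k, ?_⟩⟩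
  · simp only [swapShift, Equiv.swap_apply_left, Pi.add_apply]
    have : i ⟨n, by omega⟩ < i ⟨n + 1, hn⟩ := hmono (Fin.mk_lt_mk.2 (Nat.lt_succ_self n))
    omega
  · rwa [swapShift_apply_of_ne] at hle
    all_goals simp only [ne_eq, Fin.mk.injEq]; omega

end Crossing

section Cancellation

variable {k : ℕ} {i c : Fin k → ℕ}

theorem exists_firstCrossing (hc : ∃ n, CrossesAt i c n) :
    ∃ n, ∃ hn : n + 1 < k, i ⟨n + 1, hn⟩ ≤ i ⟨n, by omega⟩ + c ⟨n, by omega⟩ ∧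
      ∀ n' < n, ¬ CrossesAt i c n' :=
  ⟨Nat.find hc, (Nat.find_spec hc).fst, (Nat.find_spec hc).snd, fun _ => Nat.find_min hc⟩

theorem pieriSwap_eq_swapShift (hmono : StrictMono i) (hc : ∃ n, CrossesAt i c n) :
    ∃ m m' : Fin k, m ≠ m' ∧ i m ≤ i m' + c m' ∧ i m' ≤ i m + c m ∧
      pieriSwap i c = swapShift i c m m' := by
  obtain ⟨n, hn, hle, hfirst⟩ := exists_firstCrossing hc
  refine ⟨_, _, by simp, ?_, hle, pieriSwap_of_firstCrossing hn ⟨hn, hle⟩ hfirst⟩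
  exact (hmono (Fin.mk_lt_mk.2 n.lt_succ_self)).le.trans (Nat.le_add_right _ _)

theorem exists_crossesAt_pieriSwap (hmono : StrictMono i) (hc : ∃ n, CrossesAt i c n) :
    ∃ n, CrossesAt i (pieriSwap i c) n := by
  obtain ⟨n, hn, hle, hfirst⟩ := exists_firstCrossing hc
  rw [pieriSwap_of_firstCrossing hn ⟨hn, hle⟩ hfirst]
  exact ⟨n, (firstCrossing_swapShift hmono hn hfirst).1⟩

theorem pieriSwap_pieriSwap (hmono : StrictMono i) (hc : ∃ n, CrossesAt i c n) :
    pieriSwap i (pieriSwap i c) = c := by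
  obtain ⟨n, hn, hle, hfirst⟩ := exists_firstCrossing hc
  obtain ⟨hcross', hfirst'⟩ := firstCrossing_swapShift hmono hn hfirst
  have hlt : i ⟨n, by omega⟩ < i ⟨n + 1, hn⟩ := hmono (Fin.mk_lt_mk.2 n.lt_succ_self)
  rw [pieriSwap_of_firstCrossing hn ⟨hn, hle⟩ hfirst,
    pieriSwap_of_firstCrossing hn hcross' hfirst',
    swapShift_swapShift (hlt.le.trans (Nat.le_add_right _ _)) hle]

theorem sum_wedge_filter_crossesAt_eq_zero (hmono : StrictMono i) (h : ℕ) :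
    ∑ c ∈ (Nat.antidiagonalTuple k h).filter (fun c => ∃ n, CrossesAt i c n),
      wedge (i + c) = 0 := by
  refine sum_involution (fun c _ => pieriSwap i c) ?_ ?_ ?_ ?_
  · intro c hc
    obtain ⟨m, m', hne, hm, hm', hswap⟩ := pieriSwap_eq_swapShift hmono (mem_filter.1 hc).2
    rw [hswap, wedge_add_swapShift hm hm' hne, add_neg_cancel]
  · intro c hc hnonzero hfix
    obtain ⟨m, m', hne, hm, hm', hswap⟩ := pieriSwap_eq_swapShift hmono (mem_filter.1 hc).2
    exact hnonzero (wedge_eq_zero_of_swapShift_eq hm hm' hne (hswap ▸ hfix))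
  · intro c hc
    obtain ⟨hsum, hcross⟩ := mem_filter.1 hc
    obtain ⟨m, m', hne, hm, hm', hswap⟩ := pieriSwap_eq_swapShift hmono hcross
    rw [Nat.mem_antidiagonalTuple] at hsum
    rw [mem_filter, Nat.mem_antidiagonalTuple, hswap, sum_swapShift hm hm', hsum, ← hswap]
    exact ⟨rfl, exists_crossesAt_pieriSwap hmono hcross⟩
  · intro c hc
    exact pieriSwap_pieriSwap hmono (mem_filter.1 hc).2

end Cancellation

/-- Pieri's formula for Schubert derivatives. For `1 ≤ i₁ < ⋯ < i_k` and
`h ≥ 0`, `D_h(ε^{i₁} ∧ ⋯ ∧ ε^{i_k}) = ∑ ε^{j₁} ∧ ⋯ ∧ ε^{j_k}`, the sum over all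
`(j₁,…,j_k)` with `i₁ ≤ j₁ < i₂ ≤ j₂ < ⋯ < i_k ≤ j_k` and `∑ j_p = h + ∑ i_p`.
(Writing `j_m = i_m + c_m` with `c` ranging over compositions of `h` of length `k`
subject to the interlacing condition `i_m + c_m < i_{m+1}`.) -/
theorem pieri_for_schubert_derivations
    (D : ℕ → Module.End ℤ EA) (hD : IsSch D)
    (k h : ℕ) (i : Fin k → ℕ) (hmono : StrictMono i) (hi : ∀ j, 1 ≤ i j) :
    D h (wedge i) =
      ∑ c ∈ (Finset.Nat.antidiagonalTuple k h).filter
          (fun c => ∀ m m' : Fin k, ((m' : ℕ) = (m : ℕ) + 1) → i m + c m < i m'),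
        wedge (fun j => i j + c j) := by
  rw [hD.apply_wedge h i hi, ← sum_filter_add_sum_filter_not _
    (fun c => ∀ m m' : Fin k, (m' : ℕ) = m + 1 → i m + c m < i m')]
  simp_rw [← exists_crossesAt_iff, sum_wedge_filter_crossesAt_eq_zero hmono, add_zero]
  rfl

end
end

section
/- Let E_t = ∑_{i≥0} E_i t^i be the formal inverse of the Schubert derivation D_t on ⋀M (so D_t E_t = id). Then for all h > k, E_h vanishes on ⋀^k M. -/
/-!
Since `E_t` is a left inverse of `D_t`, it is determined by `D_t`: whenever `D_t y(t) = x`, one has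
`E_t x = y(t)`. This identifies three things. The Leibniz rule for `D_t` gives
`D_t (E_t a · E_t b) = a b`, so `E_t` is again multiplicative (a Hasse–Schmidt derivation);
`D_t 1 = 1` gives `E_t 1 = 1`; and `D_t (ε^j - t ε^{j+1}) = ε^j` gives `E_t ε^j = ε^j - t ε^{j+1}`.
Hence `E_t` maps a `k`-fold wedge `ε^{i₁} ∧ ⋯ ∧ ε^{i_k}` to a product of `k` polynomials of
degree one in `t`, which has no terms of degree `> k`.
-/

open scoped Classical

noncomputable section

/-- The `k`-th exterior power `⋀^k M`: the span of all `k`-fold wedges of the `ε^i`. -/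
def kPart (k : ℕ) : Submodule ℤ EA :=
  Submodule.span ℤ {y | ∃ i : Fin k → ℕ, (∀ j, 1 ≤ i j) ∧ y = wedge i}

open Finset

namespace Finset.Nat

variable {M : Type*} [AddCommMonoid M]

theorem sum_antidiagonal_ite_fst_eq (n k : ℕ) (f : ℕ × ℕ → M) :
    ∑ p ∈ antidiagonal n, (if p.1 = k then f p else 0) = if k ≤ n then f (k, n - k) else 0 := by
  simp [sum_antidiagonal_eq_sum_range_succ_mk]

theorem sum_antidiagonal_ite_snd_eq (n k : ℕ) (f : ℕ × ℕ → M) :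
    ∑ p ∈ antidiagonal n, (if p.2 = k then f p else 0) = if k ≤ n then f (n - k, k) else 0 := by
  rw [← sum_antidiagonal_swap]
  exact sum_antidiagonal_ite_fst_eq n k (f ∘ Prod.swap)

theorem sum_antidiagonal_sum_antidiagonal_assoc (n : ℕ) (f : ℕ → ℕ → ℕ → M) :
    ∑ p ∈ antidiagonal n, ∑ q ∈ antidiagonal p.2, f p.1 q.1 q.2 =
      ∑ p ∈ antidiagonal n, ∑ q ∈ antidiagonal p.1, f q.1 q.2 p.2 := by
  rw [sum_sigma', sum_sigma']
  refine sum_nbij' (fun x => ⟨(x.1.1 + x.2.1, x.2.2), (x.1.1, x.2.1)⟩)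
    (fun x => ⟨(x.2.1, x.2.2 + x.1.2), (x.2.2, x.1.2)⟩) ?_ ?_ ?_ ?_ ?_ <;>
    rintro ⟨⟨a, b⟩, c, d⟩ h <;> simp_all [mem_sigma, HasAntidiagonal.mem_antidiagonal] <;> omega

theorem sum_antidiagonal_sum_antidiagonal_add_add_add_comm (n : ℕ) (f : ℕ → ℕ → ℕ → ℕ → M) :
    ∑ p ∈ antidiagonal n, ∑ q ∈ antidiagonal p.1, ∑ r ∈ antidiagonal p.2, f q.1 q.2 r.1 r.2 =
      ∑ p ∈ antidiagonal n, ∑ q ∈ antidiagonal p.1, ∑ r ∈ antidiagonal p.2, f q.1 r.1 q.2 r.2 := by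
  simp only [← sum_product']
  rw [sum_sigma', sum_sigma']
  let σ (x : (_ : ℕ × ℕ) × (ℕ × ℕ) × (ℕ × ℕ)) : (_ : ℕ × ℕ) × (ℕ × ℕ) × (ℕ × ℕ) :=
    ⟨(x.2.1.1 + x.2.2.1, x.2.1.2 + x.2.2.2), (x.2.1.1, x.2.2.1), (x.2.1.2, x.2.2.2)⟩
  refine sum_nbij' σ σ ?_ ?_ ?_ ?_ ?_ <;> rintro ⟨⟨s, t⟩, ⟨a, b⟩, c, d⟩ h <;>
    simp_all [σ, mem_sigma, mem_product, HasAntidiagonal.mem_antidiagonal] <;> omega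

end Finset.Nat

open Finset.Nat

section InverseOfDerivation

variable {R M : Type*} [Semiring R] [AddCommMonoid M] [Module R M] {D E : ℕ → Module.End R M}

theorem apply_eq_of_sum_antidiagonal_eq
    (hED : ∀ i x, ∑ p ∈ antidiagonal i, E p.1 (D p.2 x) = if i = 0 then x else 0)
    {x : M} {y : ℕ → M} (hy : ∀ i, ∑ p ∈ antidiagonal i, D p.1 (y p.2) = if i = 0 then x else 0)
    (n : ℕ) : E n x = y n :=
  calc E n x = ∑ p ∈ antidiagonal n, E p.1 (if p.2 = 0 then x else 0) := by
        simp [apply_ite (E _), sum_antidiagonal_ite_snd_eq]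
    _ = ∑ p ∈ antidiagonal n, ∑ q ∈ antidiagonal p.1, E q.1 (D q.2 (y p.2)) := by
        simp only [← hy, map_sum]
        exact sum_antidiagonal_sum_antidiagonal_assoc n fun u m k => E u (D m (y k))
    _ = y n := by simp [hED, sum_antidiagonal_ite_fst_eq]

theorem apply_eq_zero_of_apply_eq_zero (hD₀ : ∀ x, D 0 x = x)
    (hED : ∀ i x, ∑ p ∈ antidiagonal i, E p.1 (D p.2 x) = if i = 0 then x else 0)
    {x : M} (hx : ∀ i, 1 ≤ i → D i x = 0) {n : ℕ} (hn : 1 ≤ n) : E n x = 0 := by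
  refine (apply_eq_of_sum_antidiagonal_eq hED (y := fun k => if k = 0 then x else 0)
    (fun i => ?_) n).trans (if_neg (by omega))
  simp only [apply_ite (D _), map_zero, sum_antidiagonal_ite_snd_eq]
  rcases Nat.eq_zero_or_pos i with rfl | hi
  · simp [hD₀]
  · simp [hx i hi, hi.ne']

end InverseOfDerivation

section InverseOfDerivationGroup

variable {R M : Type*} [Semiring R] [AddCommGroup M] [Module R M] {D E : ℕ → Module.End R M}

theorem apply_eq_zero_of_apply_eq_shift (hD₀ : ∀ x, D 0 x = x)
    (hED : ∀ i x, ∑ p ∈ antidiagonal i, E p.1 (D p.2 x) = if i = 0 then x else 0)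
    {x : ℕ → M} (hx : ∀ i k, D i (x k) = x (i + k)) {n : ℕ} (hn : 2 ≤ n) : E n (x 0) = 0 := by
  refine (apply_eq_of_sum_antidiagonal_eq hED
    (y := fun k => (if k = 0 then x 0 else 0) - if k = 1 then x 1 else 0) (fun i => ?_) n).trans ?_
  · simp only [map_sub, sum_sub_distrib, apply_ite (D _), map_zero, sum_antidiagonal_ite_snd_eq]
    cases i with
    | zero => simp [hD₀]
    | succ m => simp [hx]
  · rw [if_neg (by omega), if_neg (by omega), sub_zero]

end InverseOfDerivationGroup

section Multiplicativity

variable {R A : Type*} [Semiring R] [Semiring A] [Module R A] {D E : ℕ → Module.End R A}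

theorem apply_mul_of_leibniz
    (hD : ∀ i (a b : A), D i (a * b) = ∑ p ∈ antidiagonal i, D p.1 a * D p.2 b)
    (hDE : ∀ i x, ∑ p ∈ antidiagonal i, D p.1 (E p.2 x) = if i = 0 then x else 0)
    (hED : ∀ i x, ∑ p ∈ antidiagonal i, E p.1 (D p.2 x) = if i = 0 then x else 0)
    (n : ℕ) (a b : A) : E n (a * b) = ∑ p ∈ antidiagonal n, E p.1 a * E p.2 b := by
  refine apply_eq_of_sum_antidiagonal_eq hED
    (y := fun n => ∑ p ∈ antidiagonal n, E p.1 a * E p.2 b) (fun i => ?_) n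
  calc ∑ p ∈ antidiagonal i, D p.1 (∑ q ∈ antidiagonal p.2, E q.1 a * E q.2 b)
      = ∑ p ∈ antidiagonal i, ∑ q ∈ antidiagonal p.1, ∑ r ∈ antidiagonal p.2,
          D q.1 (E r.1 a) * D q.2 (E r.2 b) := by
        simp only [map_sum, hD]
        exact sum_congr rfl fun p _ => sum_comm
    _ = ∑ p ∈ antidiagonal i, ∑ q ∈ antidiagonal p.1, ∑ r ∈ antidiagonal p.2,
          D q.1 (E q.2 a) * D r.1 (E r.2 b) :=
        sum_antidiagonal_sum_antidiagonal_add_add_add_comm i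
          fun d e d' e' => D d (E d' a) * D e (E e' b)
    _ = ∑ p ∈ antidiagonal i, (if p.1 = 0 then a else 0) * (if p.2 = 0 then b else 0) := by
        simp only [← sum_mul_sum, hDE]
    _ = if i = 0 then a * b else 0 := by
        simp only [ite_zero_mul_ite_zero, ite_and, sum_antidiagonal_ite_fst_eq]
        simp

end Multiplicativity

theorem apply_list_prod_eq_zero {A : Type*} [Semiring A] {E : ℕ → A → A}
    (hE : ∀ n a b, E n (a * b) = ∑ p ∈ antidiagonal n, E p.1 a * E p.2 b)
    (hE₁ : ∀ n, 1 ≤ n → E n 1 = 0) {l : List A} (hl : ∀ a ∈ l, ∀ n, 2 ≤ n → E n a = 0)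
    {n : ℕ} (hn : l.length < n) : E n l.prod = 0 := by
  induction l generalizing n with
  | nil => exact hE₁ n hn
  | cons a l ih =>
    rw [List.prod_cons, hE]
    refine sum_eq_zero fun p hp => ?_
    rw [HasAntidiagonal.mem_antidiagonal] at hp
    by_cases hp₂ : l.length < p.2
    · rw [ih (fun b hb => hl b (List.mem_cons_of_mem a hb)) hp₂, mul_zero]
    · rw [hl a List.mem_cons_self p.1 (by simp at hn; omega), zero_mul]

/-- if `E_t = ∑ E_i t^i` is the formal inverse of the Schubert derivation
`D_t` (so `D_t ∘ E_t = E_t ∘ D_t = id`), then `E_h` vanishes on `⋀^k M` for all `h > k`. -/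
theorem inverse_derivation_vanishes_in_high_degree
    (k : ℕ) (D E : ℕ → Module.End ℤ EA) (hD : IsSch D)
    (hDE : ∀ (i : ℕ) (α : EA),
      (∑ p ∈ Finset.HasAntidiagonal.antidiagonal i, D p.1 (E p.2 α)) = if i = 0 then α else 0)
    (hED : ∀ (i : ℕ) (α : EA),
      (∑ p ∈ Finset.HasAntidiagonal.antidiagonal i, E p.1 (D p.2 α)) = if i = 0 then α else 0) :
    ∀ h, k < h → ∀ x ∈ kPart k, E h x = 0 := by
  obtain ⟨hD₀, hD₁, hDmul, hDeps⟩ := hD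
  have hEeps (j : ℕ) (hj : 1 ≤ j) (n : ℕ) (hn : 2 ≤ n) : E n (eps j) = 0 := by
    simpa using apply_eq_zero_of_apply_eq_shift hD₀ hED (x := fun m => eps (m + j))
      (fun i m => by simpa [add_assoc] using hDeps i (m + j) (by omega)) hn
  intro h hkh x hx
  refine (Submodule.span_le (p := LinearMap.ker (E h))).mpr ?_ hx
  rintro _ ⟨i, hi, rfl⟩
  rw [SetLike.mem_coe, LinearMap.mem_ker, wedge]
  refine apply_list_prod_eq_zero (E := fun n => E n) (apply_mul_of_leibniz hDmul hDE hED)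
    (fun n hn => apply_eq_zero_of_apply_eq_zero hD₀ hED hD₁ hn) ?_ (by simpa using hkh)
  simp only [List.mem_ofFn, forall_exists_index]
  rintro _ j rfl
  exact hEeps (i j) (hi j)

end
end

section
/- The ring ℤ[D₁,…,D_k]/(D_{n-k+1},…,D_n) is isomorphic to ℤ[σ₁,…,σ_{n-k}]/(Y_{k+1},…,Y_n), where the Y_i are defined by the formal power series identity (1 + σ₁t + ⋯ + σ_{n-k}t^{n-k})^{-1} = ∑_{i≥0} (−1)^i Y_i t^i, the isomorphism matching σ_i with D_i; i.e. the intersection ring of (⋀^k M_n, D_t) is isomorphic to the Chow ring of the Grassmannian G_k(n). -/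
noncomputable section

open PowerSeries

/-- The power series `1 + X₁ t + ⋯ + X_k t^k` over `ℤ[X₁, …, X_k]` (variable `j : Fin k`
standing for `X_{j+1} = D_{j+1}`). -/
def fSeries (k : ℕ) : PowerSeries (MvPolynomial (Fin k) ℤ) :=
  PowerSeries.mk fun h =>
    if hh : 1 ≤ h ∧ h ≤ k then MvPolynomial.X (⟨h - 1, by omega⟩ : Fin k)
    else if h = 0 then 1 else 0

/-- The coefficients `E_j` of the formal inverse of `∑_h D_h t^h`: `E_j` depends only on
`D₁, …, D_j`, hence is a well-defined polynomial in the variables `X₁, …, X_k` for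
`j ≤ k`. -/
def ESeries (k : ℕ) : PowerSeries (MvPolynomial (Fin k) ℤ) :=
  PowerSeries.invOfUnit (fSeries k) 1

/-- The truncation of `E` keeping only `E_0, …, E_k` (the relations `E_j = 0` for
`j > k` hold on `⋀^k M`). -/
def ETrunc (k : ℕ) : PowerSeries (MvPolynomial (Fin k) ℤ) :=
  PowerSeries.mk fun j =>
    if j ≤ k then PowerSeries.coeff (R := MvPolynomial (Fin k) ℤ) j (ESeries k) else 0

/-- The polynomial expression `δ h = D_h(D₁, …, D_k)` of `D_h` in `D₁, …, D_k`, defined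
as the `h`-th coefficient of the inverse of the truncated series `E_0 + ⋯ + E_k t^k`;
for `h ≤ k` this is just the variable `X_h`, and for `h > k` it implements the recursion
`D_{k+i} = -E₁D_{k+i-1} + ⋯ + (-1)^{k+1}E_k D_i`. -/
def deltaPoly (k h : ℕ) : MvPolynomial (Fin k) ℤ :=
  PowerSeries.coeff (R := MvPolynomial (Fin k) ℤ) h (PowerSeries.invOfUnit (ETrunc k) 1)

/-- The power series `1 + σ₁ t + ⋯ + σ_m t^m` over `ℤ[σ₁, …, σ_m]`. -/
def sigmaSeries (m : ℕ) : PowerSeries (MvPolynomial (Fin m) ℤ) :=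
  PowerSeries.mk fun h =>
    if hh : 1 ≤ h ∧ h ≤ m then MvPolynomial.X (⟨h - 1, by omega⟩ : Fin m)
    else if h = 0 then 1 else 0

/-- `Y_i(σ) ∈ ℤ[σ₁, …, σ_m]`, defined by
`(1 + σ₁t + ⋯ + σ_m t^m)⁻¹ = ∑_{i ≥ 0} (-1)^i Y_i t^i`. -/
def Ypoly (m i : ℕ) : MvPolynomial (Fin m) ℤ :=
  (-1) ^ i * PowerSeries.coeff (R := MvPolynomial (Fin m) ℤ) i
    (PowerSeries.invOfUnit (sigmaSeries m) 1)

/-!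
Write `f = 1 + D₁t + ⋯ + D_kt^k`, `Ē` for the truncation of `f⁻¹` at degree `k` (so that
`Ē⁻¹ = ∑ D_h t^h`) and `s = 1 + σ₁t + ⋯ + σ_{n-k}t^{n-k}`. The coefficients of the inverse of a
polynomial of degree `d` obey a linear recursion of length `d`. Hence modulo the `Y_i` the series
`s⁻¹` has degree `≤ k`, and modulo the `D_h` the series `Ē⁻¹` has degree `≤ n - k`.

Under `D_j ↦ σ_j` (with `σ_j = 0` for `j > n - k`) the series `f` agrees with `s` up to degree
`k`, so `Ē` goes to the truncation of `s⁻¹`, which is `s⁻¹` modulo the `Y_i`; thus `Ē⁻¹ ↦ s`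
and every `D_h` with `h > n - k` is killed. Under `σ_i ↦ D_i`, `s` goes to `Ē⁻¹` modulo the `D_h`,
so `s⁻¹ ↦ Ē`, which has no coefficients above `k`, and every `Y_i` is killed. On generators
the two induced maps are visibly inverse to each other.
-/

namespace PowerSeries

variable {R S : Type*} [CommRing R] [CommRing S]

theorem eq_invOfUnit_one_of_mul_eq_one {a b : R⟦X⟧} (ha : constantCoeff a = 1)
    (h : a * b = 1) : b = invOfUnit a 1 :=
  (left_inv_eq_right_inv (invOfUnit_mul a 1 (by simpa using ha)) h).symm

theorem constantCoeff_map_eq_one (f : R →+* S) {a : R⟦X⟧} (ha : constantCoeff a = 1) :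
    constantCoeff (map f a) = 1 := by
  rw [← coeff_zero_eq_constantCoeff_apply, coeff_map, coeff_zero_eq_constantCoeff_apply, ha,
    map_one]

theorem map_invOfUnit_one (f : R →+* S) {a : R⟦X⟧} (ha : constantCoeff a = 1) :
    map f (invOfUnit a 1) = invOfUnit (map f a) 1 :=
  eq_invOfUnit_one_of_mul_eq_one (constantCoeff_map_eq_one f ha)
    (by rw [← map_mul, mul_invOfUnit a 1 (by simpa using ha), map_one])

theorem invOfUnit_invOfUnit_one {a : R⟦X⟧} (ha : constantCoeff a = 1) :
    invOfUnit (invOfUnit a 1) 1 = a :=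
  (eq_invOfUnit_one_of_mul_eq_one (by simp) (invOfUnit_mul a 1 (by simpa using ha))).symm

theorem invOfUnit_one_eq_iff {a b : R⟦X⟧} (ha : constantCoeff a = 1)
    (hb : constantCoeff b = 1) : invOfUnit a 1 = b ↔ a = invOfUnit b 1 := by
  constructor
  · rintro rfl
    exact (invOfUnit_invOfUnit_one ha).symm
  · rintro rfl
    exact invOfUnit_invOfUnit_one hb

theorem coeff_invOfUnit_one_eq_of_coeff_eq {a b : R⟦X⟧} {N : ℕ}
    (h : ∀ j ≤ N, coeff j a = coeff j b) :
    ∀ j ≤ N, coeff j (invOfUnit a 1) = coeff j (invOfUnit b 1) := by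
  intro j
  induction j using Nat.strong_induction_on with
  | _ j ih =>
    intro hj
    rw [coeff_invOfUnit, coeff_invOfUnit]
    split_ifs
    · rfl
    · congr 1
      refine Finset.sum_congr rfl fun x hx => ?_
      rw [Finset.HasAntidiagonal.mem_antidiagonal] at hx
      split_ifs with hx2
      · rw [h x.1 (by omega), ih x.2 hx2 (by omega)]
      · rfl

theorem coeff_invOfUnit_one_mem_of_mem {a : R⟦X⟧} {d K : ℕ} (I : Ideal R)
    (ha : ∀ i, d < i → coeff i a = 0)
    (hI : ∀ j, K < j → j ≤ K + d → coeff j (invOfUnit a 1) ∈ I) :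
    ∀ j, K < j → coeff j (invOfUnit a 1) ∈ I := by
  intro j
  induction j using Nat.strong_induction_on with
  | _ j ih =>
    intro hj
    by_cases hjd : j ≤ K + d
    · exact hI j hj hjd
    rw [coeff_invOfUnit, if_neg (by omega)]
    refine I.mul_mem_left _ (I.sum_mem fun x hx => ?_)
    rw [Finset.HasAntidiagonal.mem_antidiagonal] at hx
    split_ifs with hx2
    · by_cases hx1 : d < x.1
      · rw [ha x.1 hx1, zero_mul]
        exact I.zero_mem
      · exact I.mul_mem_left _ (ih x.2 hx2 (by omega))
    · exact I.zero_mem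

end PowerSeries

section

variable {k m n : ℕ}

theorem fSeries_eq_sigmaSeries (k : ℕ) : fSeries k = sigmaSeries k := rfl

theorem coeff_zero_sigmaSeries (m : ℕ) : coeff 0 (sigmaSeries m) = 1 := by
  simp [sigmaSeries, coeff_mk]

theorem constantCoeff_sigmaSeries (m : ℕ) : constantCoeff (sigmaSeries m) = 1 := by
  rw [← coeff_zero_eq_constantCoeff_apply, coeff_zero_sigmaSeries]

theorem coeff_succ_sigmaSeries {i : ℕ} (hi : i < m) :
    coeff (i + 1) (sigmaSeries m) = MvPolynomial.X ⟨i, hi⟩ := by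
  rw [sigmaSeries, coeff_mk, dif_pos ⟨by omega, hi⟩]
  rfl

theorem coeff_sigmaSeries_of_lt {j : ℕ} (hj : m < j) : coeff j (sigmaSeries m) = 0 := by
  rw [sigmaSeries, coeff_mk, dif_neg (by omega), if_neg (by omega)]

theorem coeff_ETrunc (k j : ℕ) :
    coeff j (ETrunc k) = if j ≤ k then coeff j (ESeries k) else 0 := by
  rw [ETrunc, coeff_mk]

theorem constantCoeff_ETrunc (k : ℕ) : constantCoeff (ETrunc k) = 1 := by
  rw [← coeff_zero_eq_constantCoeff_apply, coeff_ETrunc, if_pos k.zero_le, ESeries,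
    coeff_zero_eq_constantCoeff_apply, constantCoeff_invOfUnit, inv_one, Units.val_one]

theorem deltaPoly_of_le {h : ℕ} (hh : h ≤ k) : deltaPoly k h = coeff h (sigmaSeries k) := by
  rw [deltaPoly, coeff_invOfUnit_one_eq_of_coeff_eq (b := ESeries k)
      (fun j hj => by rw [coeff_ETrunc, if_pos hj]) h hh,
    ESeries, fSeries_eq_sigmaSeries, invOfUnit_invOfUnit_one (constantCoeff_sigmaSeries k)]

theorem deltaPoly_succ {i : ℕ} (hi : i < k) :
    deltaPoly k (i + 1) = MvPolynomial.X ⟨i, hi⟩ := by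
  rw [deltaPoly_of_le hi, coeff_succ_sigmaSeries]

def deltaIdeal (k n : ℕ) : Ideal (MvPolynomial (Fin k) ℤ) :=
  Ideal.span {ψ | ∃ h, n - k + 1 ≤ h ∧ h ≤ n ∧ ψ = deltaPoly k h}

def yIdeal (k n : ℕ) : Ideal (MvPolynomial (Fin (n - k)) ℤ) :=
  Ideal.span {ψ | ∃ i, k + 1 ≤ i ∧ i ≤ n ∧ ψ = Ypoly (n - k) i}

theorem deltaPoly_mem_deltaIdeal (hkn : k ≤ n) {h : ℕ} (hh : n - k < h) :
    deltaPoly k h ∈ deltaIdeal k n := by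
  refine coeff_invOfUnit_one_mem_of_mem (a := ETrunc k) (d := k) _ (fun i hi => ?_)
    (fun j hj hjn => ?_) h hh
  · rw [coeff_ETrunc, if_neg (by omega)]
  · rw [deltaIdeal]
    exact Ideal.subset_span ⟨j, by omega, by omega, rfl⟩

theorem coeff_invOfUnit_sigmaSeries_mem_yIdeal (hkn : k ≤ n) {j : ℕ} (hj : k < j) :
    coeff j (invOfUnit (sigmaSeries (n - k)) 1) ∈ yIdeal k n := by
  refine coeff_invOfUnit_one_mem_of_mem (d := n - k) _ (fun i hi => coeff_sigmaSeries_of_lt hi)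
    (fun j hj hjn => ?_) j hj
  have hY : Ypoly (n - k) j ∈ yIdeal k n := by
    rw [yIdeal]
    exact Ideal.subset_span ⟨j, by omega, by omega, rfl⟩
  have hc : coeff j (invOfUnit (sigmaSeries (n - k)) 1) = (-1) ^ j * Ypoly (n - k) j := by
    rw [Ypoly, ← mul_assoc, ← pow_add, Even.neg_one_pow ⟨j, rfl⟩, one_mul]
  rw [hc]
  exact Ideal.mul_mem_left _ _ hY

def sigmaToDelta (k n : ℕ) : MvPolynomial (Fin (n - k)) ℤ →ₐ[ℤ] MvPolynomial (Fin k) ℤ :=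
  MvPolynomial.aeval fun i => deltaPoly k (i + 1)

/-- `D_{j+1} ↦ σ_{j+1}`, read as `0` when `j + 1 > n - k`. -/
def deltaToSigma (k n : ℕ) : MvPolynomial (Fin k) ℤ →ₐ[ℤ] MvPolynomial (Fin (n - k)) ℤ :=
  MvPolynomial.aeval fun j => coeff (j + 1) (sigmaSeries (n - k))

theorem coeff_map_deltaToSigma_fSeries {j : ℕ} (hj : j ≤ k) :
    coeff j (map (deltaToSigma k n).toRingHom (fSeries k)) =
      coeff j (sigmaSeries (n - k)) := by
  rw [coeff_map, fSeries_eq_sigmaSeries]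
  rcases j with _ | i
  · rw [coeff_zero_sigmaSeries, coeff_zero_sigmaSeries, map_one]
  · rw [coeff_succ_sigmaSeries (by omega)]
    exact MvPolynomial.aeval_X _ _

theorem map_deltaToSigma_invOfUnit_ETrunc (hkn : k ≤ n) :
    map ((Ideal.Quotient.mk (yIdeal k n)).comp (deltaToSigma k n).toRingHom)
        (invOfUnit (ETrunc k) 1) =
      map (Ideal.Quotient.mk (yIdeal k n)) (sigmaSeries (n - k)) := by
  set π := Ideal.Quotient.mk (yIdeal k n)
  have hE : map (π.comp (deltaToSigma k n).toRingHom) (ETrunc k) =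
      map π (invOfUnit (sigmaSeries (n - k)) 1) := by
    ext j
    rw [coeff_map, coeff_map, coeff_ETrunc]
    split_ifs with hj
    · rw [RingHom.comp_apply, ← coeff_map, ESeries,
        map_invOfUnit_one (a := fSeries k) _ (constantCoeff_sigmaSeries k),
        coeff_invOfUnit_one_eq_of_coeff_eq (fun _ hi => coeff_map_deltaToSigma_fSeries hi) j hj]
    · rw [map_zero, eq_comm, Ideal.Quotient.eq_zero_iff_mem]
      exact coeff_invOfUnit_sigmaSeries_mem_yIdeal hkn (by omega)
  rw [map_invOfUnit_one _ (constantCoeff_ETrunc k), hE,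
    map_invOfUnit_one _ (constantCoeff_sigmaSeries _),
    invOfUnit_invOfUnit_one (constantCoeff_map_eq_one _ (constantCoeff_sigmaSeries _))]

theorem mk_deltaToSigma_deltaPoly (hkn : k ≤ n) (h : ℕ) :
    Ideal.Quotient.mk (yIdeal k n) (deltaToSigma k n (deltaPoly k h)) =
      Ideal.Quotient.mk (yIdeal k n) (coeff h (sigmaSeries (n - k))) := by
  simpa [deltaPoly] using congrArg (coeff h) (map_deltaToSigma_invOfUnit_ETrunc hkn)

theorem map_sigmaToDelta_sigmaSeries (hkn : k ≤ n) :
    map ((Ideal.Quotient.mk (deltaIdeal k n)).comp (sigmaToDelta k n).toRingHom)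
        (sigmaSeries (n - k)) =
      map (Ideal.Quotient.mk (deltaIdeal k n)) (invOfUnit (ETrunc k) 1) := by
  ext h
  rw [coeff_map, coeff_map, ← deltaPoly]
  rcases h with _ | i
  · rw [coeff_zero_sigmaSeries, deltaPoly_of_le k.zero_le, coeff_zero_sigmaSeries, map_one,
      map_one]
  by_cases hi : i < n - k
  · rw [coeff_succ_sigmaSeries hi, RingHom.comp_apply, AlgHom.toRingHom_eq_coe,
      RingHom.coe_coe, sigmaToDelta, MvPolynomial.aeval_X]
  · rw [coeff_sigmaSeries_of_lt (by omega), map_zero, eq_comm, Ideal.Quotient.eq_zero_iff_mem]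
    exact deltaPoly_mem_deltaIdeal hkn (by omega)

theorem mk_sigmaToDelta_coeff_sigmaSeries (hkn : k ≤ n) (h : ℕ) :
    Ideal.Quotient.mk (deltaIdeal k n) (sigmaToDelta k n (coeff h (sigmaSeries (n - k)))) =
      Ideal.Quotient.mk (deltaIdeal k n) (deltaPoly k h) := by
  simpa [deltaPoly] using congrArg (coeff h) (map_sigmaToDelta_sigmaSeries hkn)

theorem map_sigmaToDelta_invOfUnit_sigmaSeries (hkn : k ≤ n) :
    map ((Ideal.Quotient.mk (deltaIdeal k n)).comp (sigmaToDelta k n).toRingHom)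
        (invOfUnit (sigmaSeries (n - k)) 1) =
      map (Ideal.Quotient.mk (deltaIdeal k n)) (ETrunc k) := by
  rw [map_invOfUnit_one _ (constantCoeff_sigmaSeries _),
    invOfUnit_one_eq_iff (constantCoeff_map_eq_one _ (constantCoeff_sigmaSeries _))
      (constantCoeff_map_eq_one _ (constantCoeff_ETrunc k)),
    map_sigmaToDelta_sigmaSeries hkn, map_invOfUnit_one _ (constantCoeff_ETrunc k)]

theorem mk_sigmaToDelta_coeff_invOfUnit_sigmaSeries (hkn : k ≤ n) {j : ℕ} (hj : k < j) :
    Ideal.Quotient.mk (deltaIdeal k n)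
      (sigmaToDelta k n (coeff j (invOfUnit (sigmaSeries (n - k)) 1))) = 0 := by
  simpa [coeff_ETrunc, hj.not_ge] using
    congrArg (coeff j) (map_sigmaToDelta_invOfUnit_sigmaSeries hkn)

theorem deltaIdeal_le_ker (hkn : k ≤ n) :
    deltaIdeal k n ≤
      RingHom.ker ((Ideal.Quotient.mkₐ ℤ (yIdeal k n)).comp (deltaToSigma k n)) := by
  rw [deltaIdeal, Ideal.span_le]
  rintro _ ⟨h, hh, -, rfl⟩
  rw [SetLike.mem_coe, RingHom.mem_ker, AlgHom.comp_apply, Ideal.Quotient.mkₐ_eq_mk,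
    mk_deltaToSigma_deltaPoly hkn, coeff_sigmaSeries_of_lt (by omega), map_zero]

theorem yIdeal_le_ker (hkn : k ≤ n) :
    yIdeal k n ≤
      RingHom.ker ((Ideal.Quotient.mkₐ ℤ (deltaIdeal k n)).comp (sigmaToDelta k n)) := by
  rw [yIdeal, Ideal.span_le]
  rintro _ ⟨i, hi, -, rfl⟩
  rw [SetLike.mem_coe, RingHom.mem_ker, AlgHom.comp_apply, Ideal.Quotient.mkₐ_eq_mk, Ypoly,
    map_mul, map_mul, mk_sigmaToDelta_coeff_invOfUnit_sigmaSeries hkn (by omega), mul_zero]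

def quotDeltaToSigma (hkn : k ≤ n) :
    (MvPolynomial (Fin k) ℤ ⧸ deltaIdeal k n) →ₐ[ℤ]
      MvPolynomial (Fin (n - k)) ℤ ⧸ yIdeal k n :=
  Ideal.Quotient.liftₐ _ _ fun _ ha => deltaIdeal_le_ker hkn ha

def quotSigmaToDelta (hkn : k ≤ n) :
    (MvPolynomial (Fin (n - k)) ℤ ⧸ yIdeal k n) →ₐ[ℤ]
      MvPolynomial (Fin k) ℤ ⧸ deltaIdeal k n :=
  Ideal.Quotient.liftₐ _ _ fun _ ha => yIdeal_le_ker hkn ha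

theorem quotDeltaToSigma_mk (hkn : k ≤ n) (a : MvPolynomial (Fin k) ℤ) :
    quotDeltaToSigma hkn (Ideal.Quotient.mk _ a) = Ideal.Quotient.mk _ (deltaToSigma k n a) :=
  Ideal.Quotient.lift_mk _ _ _

theorem quotSigmaToDelta_mk (hkn : k ≤ n) (a : MvPolynomial (Fin (n - k)) ℤ) :
    quotSigmaToDelta hkn (Ideal.Quotient.mk _ a) = Ideal.Quotient.mk _ (sigmaToDelta k n a) :=
  Ideal.Quotient.lift_mk _ _ _

def quotDeltaEquivQuotSigma (hkn : k ≤ n) :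
    (MvPolynomial (Fin k) ℤ ⧸ deltaIdeal k n) ≃ₐ[ℤ]
      MvPolynomial (Fin (n - k)) ℤ ⧸ yIdeal k n :=
  AlgEquiv.ofAlgHom (quotDeltaToSigma hkn) (quotSigmaToDelta hkn)
    (by
      refine Ideal.Quotient.algHom_ext _ (MvPolynomial.algHom_ext fun i => ?_)
      rw [AlgHom.comp_apply, AlgHom.comp_apply, AlgHom.id_comp, Ideal.Quotient.mkₐ_eq_mk,
        quotSigmaToDelta_mk, sigmaToDelta, MvPolynomial.aeval_X, quotDeltaToSigma_mk,
        mk_deltaToSigma_deltaPoly hkn, coeff_succ_sigmaSeries i.isLt])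
    (by
      refine Ideal.Quotient.algHom_ext _ (MvPolynomial.algHom_ext fun j => ?_)
      rw [AlgHom.comp_apply, AlgHom.comp_apply, AlgHom.id_comp, Ideal.Quotient.mkₐ_eq_mk,
        quotDeltaToSigma_mk, deltaToSigma, MvPolynomial.aeval_X, quotSigmaToDelta_mk,
        mk_sigmaToDelta_coeff_sigmaSeries hkn, deltaPoly_succ j.isLt])

end

theorem intersection_ring_iso_chow_ring_general (k n : ℕ) (hkn : k ≤ n) :
    ∃ e : (MvPolynomial (Fin k) ℤ ⧸
            Ideal.span {ψ | ∃ h, n - k + 1 ≤ h ∧ h ≤ n ∧ ψ = deltaPoly k h}) ≃+*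
          (MvPolynomial (Fin (n - k)) ℤ ⧸
            Ideal.span {ψ | ∃ i, k + 1 ≤ i ∧ i ≤ n ∧ ψ = Ypoly (n - k) i}),
      ∀ i : Fin (n - k),
        e (Ideal.Quotient.mk _ (deltaPoly k ((i : ℕ) + 1))) =
          Ideal.Quotient.mk _ (MvPolynomial.X i) := by
  refine ⟨(quotDeltaEquivQuotSigma hkn).toRingEquiv, fun i => ?_⟩
  show quotDeltaToSigma hkn (Ideal.Quotient.mk _ _) = Ideal.Quotient.mk (yIdeal k n) _
  rw [quotDeltaToSigma_mk, mk_deltaToSigma_deltaPoly hkn, coeff_succ_sigmaSeries i.isLt]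

/-- `ℤ[D₁,…,D_k]/(D_{n-k+1},…,D_n) ≅ ℤ[σ₁,…,σ_{n-k}]/(Y_{k+1},…,Y_n)`,
the isomorphism matching `σ_i` with `D_i` (i.e. the class of the `i`-th variable on the
right corresponds to the class of the polynomial expression `δ i` of `D_i` on the left);
the right-hand side is the standard presentation of the Chow ring of `G_k(n)`. -/
theorem intersection_ring_iso_chow_ring (k n : ℕ) (hk : 1 ≤ k) (hkn : k ≤ n) :
    ∃ e : (MvPolynomial (Fin k) ℤ ⧸
            Ideal.span {ψ | ∃ h, n - k + 1 ≤ h ∧ h ≤ n ∧ ψ = deltaPoly k h}) ≃+*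
          (MvPolynomial (Fin (n - k)) ℤ ⧸
            Ideal.span {ψ | ∃ i, k + 1 ≤ i ∧ i ≤ n ∧ ψ = Ypoly (n - k) i}),
      ∀ i : Fin (n - k),
        e (Ideal.Quotient.mk _ (deltaPoly k ((i : ℕ) + 1))) =
          Ideal.Quotient.mk _ (MvPolynomial.X i) :=
  intersection_ring_iso_chow_ring_general k n hkn

end
end

section
/- Let M[D_n] be M regarded as a free module of rank n over ℤ[D_n] with basis ε^1, …, ε^n. The intersection ring of the pair (M[D_n], D_t) is ℤ[D_n][D₁]/(D₁^n − D_n); renaming D_n = q this is ℤ[q][D₁]/(D₁^n − q), the small quantum cohomology ring of ℙ^{n−1}. -/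
noncomputable section

/-- The shift endomorphism `D₁` with `D₁(ε^i) = ε^{i+1}`, so `D_i = D₁^i`. -/
def D1 : Module.End ℤ Mmod := Finsupp.lmapDomain ℤ ℤ (· + 1)

/-- Evaluation of a two-variable polynomial `φ ∈ ℤ[q][D₁]` (variable `0` standing for
`q = D_n` and variable `1` for `D₁`) on `ε^1 ∈ M[D_n]`. -/
def evalQ1 (n : ℕ) (φ : MvPolynomial (Fin 2) ℤ) : Mmod :=
  (∑ m ∈ φ.support, MvPolynomial.coeff m φ •
    ((D1 ^ n) ^ (m 0) * D1 ^ (m 1))) (ee 1)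

/-!
Identifying `M` with `ℤ[x]` via `ε^{k+1} ↦ x^k` turns `D₁` into multiplication by `x`, so
evaluation at `ε^1` becomes the substitution `ℤ[q, D₁] → ℤ[x]`, `q ↦ x^n`, `D₁ ↦ x`. It is
surjective since `D₁ ↦ x` alone already hits everything. Substituting back along `x ↦ D₁` is the
identity on `ℤ[q, D₁] / (D₁^n − q)`, as both sides are algebra maps agreeing on `q` and `D₁`; hence
every polynomial is congruent to one determined by its image, and the kernel is `(D₁^n − q)`.
-/

open MvPolynomial

namespace MvPolynomial

variable {R : Type*} [CommRing R]

theorem aeval_cons_X_surjective (p : Polynomial R) :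
    Function.Surjective (aeval ![p, Polynomial.X] : MvPolynomial (Fin 2) R → Polynomial R) :=
  fun r => ⟨Polynomial.aeval (X 1) r, by
    rw [← Polynomial.aeval_algHom_apply, aeval_X, Matrix.cons_val_one, Matrix.cons_val_zero,
      Polynomial.aeval_X_left_apply]⟩

theorem sub_aeval_X_one_aeval_cons_X_mem_span (p : Polynomial R) (φ : MvPolynomial (Fin 2) R) :
    φ - Polynomial.aeval (X 1) (aeval ![p, Polynomial.X] φ) ∈
      Ideal.span {Polynomial.aeval (X 1 : MvPolynomial (Fin 2) R) p - X 0} := by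
  let I := Ideal.span {Polynomial.aeval (X 1 : MvPolynomial (Fin 2) R) p - X 0}
  have hcomp : (Ideal.Quotient.mkₐ R I).comp
      ((Polynomial.aeval (X 1)).comp (aeval ![p, Polynomial.X])) = Ideal.Quotient.mkₐ R I := by
    refine MvPolynomial.algHom_ext (Fin.forall_fin_two.2 ⟨?_, ?_⟩)
    · simpa only [AlgHom.comp_apply, aeval_X, Matrix.cons_val_zero, Ideal.Quotient.mkₐ_eq_mk,
        Ideal.Quotient.mk_eq_mk_iff_sub_mem] using Ideal.mem_span_singleton_self _
    · simp
  rw [← Ideal.Quotient.mk_eq_mk_iff_sub_mem]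
  exact (congrArg (· φ) hcomp).symm

theorem ker_aeval_cons_X (p : Polynomial R) :
    RingHom.ker (aeval ![p, Polynomial.X] : MvPolynomial (Fin 2) R →ₐ[R] Polynomial R) =
      Ideal.span {Polynomial.aeval (X 1 : MvPolynomial (Fin 2) R) p - X 0} := by
  refine le_antisymm (fun φ hφ => ?_) ?_
  · simpa [(RingHom.mem_ker).1 hφ] using sub_aeval_X_one_aeval_cons_X_mem_span p φ
  · rw [Ideal.span_le, Set.singleton_subset_iff, SetLike.mem_coe, RingHom.mem_ker, map_sub,
      ← Polynomial.aeval_algHom_apply]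
    simp

end MvPolynomial

section ShiftModule

variable (R : Type*) [Semiring R]

def finsuppEquivPolynomial : (ℕ →₀ R) ≃ₗ[R] Polynomial R :=
  (AddMonoidAlgebra.coeffLinearEquiv R).symm.trans (Polynomial.toFinsuppIsoLinear R).symm

variable {R}

@[simp]
theorem finsuppEquivPolynomial_single (k : ℕ) (r : R) :
    finsuppEquivPolynomial R (Finsupp.single k r) = Polynomial.monomial k r := by
  apply Polynomial.toFinsupp_injective
  rw [Polynomial.toFinsupp_monomial]
  rfl

theorem finsuppEquivPolynomial_lmapDomain_succ (v : ℕ →₀ R) :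
    finsuppEquivPolynomial R (Finsupp.lmapDomain R R (· + 1) v) =
      Polynomial.X * finsuppEquivPolynomial R v := by
  induction v using Finsupp.induction_linear with
  | zero => simp
  | add v w hv hw => simp only [map_add, hv, hw, mul_add]
  | single k r => simp [Finsupp.mapDomain_single, Polynomial.X_mul_monomial]

end ShiftModule

theorem finsuppEquivPolynomial_D1_apply (v : Mmod) :
    finsuppEquivPolynomial ℤ (D1 v) = Polynomial.X * finsuppEquivPolynomial ℤ v :=
  finsuppEquivPolynomial_lmapDomain_succ v

theorem finsuppEquivPolynomial_D1_pow_apply (k : ℕ) (v : Mmod) :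
    finsuppEquivPolynomial ℤ ((D1 ^ k) v) = Polynomial.X ^ k * finsuppEquivPolynomial ℤ v := by
  induction k with
  | zero => simp
  | succ k ih =>
    rw [pow_succ', Module.End.mul_apply, finsuppEquivPolynomial_D1_apply, ih, pow_succ', mul_assoc]

theorem finsuppEquivPolynomial_evalQ1 (n : ℕ) (φ : MvPolynomial (Fin 2) ℤ) :
    finsuppEquivPolynomial ℤ (evalQ1 n φ) = aeval ![Polynomial.X ^ n, Polynomial.X] φ := by
  conv_rhs => rw [φ.as_sum, map_sum]
  simp only [evalQ1, LinearMap.sum_apply, map_sum, LinearMap.smul_apply, map_zsmul, ← pow_mul,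
    ← pow_add, finsuppEquivPolynomial_D1_pow_apply, ee]
  refine Finset.sum_congr rfl fun m _ => ?_
  simp [aeval_monomial, Finsupp.prod_pow, Fin.prod_univ_two, pow_mul, pow_add, zsmul_eq_mul]

theorem intersection_ring_of_quantum_projective_space_general (n : ℕ) :
    Function.Surjective (evalQ1 n) ∧
    (∀ φ : MvPolynomial (Fin 2) ℤ,
        evalQ1 n φ = 0 ↔
          φ ∈ Ideal.span {MvPolynomial.X 1 ^ n - MvPolynomial.X 0}) := by
  have hfactor :
      evalQ1 n = (finsuppEquivPolynomial ℤ).symm ∘ aeval ![Polynomial.X ^ n, Polynomial.X] :=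
    funext fun φ => (LinearEquiv.eq_symm_apply _).2 (finsuppEquivPolynomial_evalQ1 n φ)
  have hker := ker_aeval_cons_X (R := ℤ) (Polynomial.X ^ n)
  rw [map_pow, Polynomial.aeval_X] at hker
  refine ⟨hfactor ▸ (finsuppEquivPolynomial ℤ).symm.surjective.comp
    (aeval_cons_X_surjective _), fun φ => ?_⟩
  rw [← hker, RingHom.mem_ker, hfactor, Function.comp_apply, LinearEquiv.map_eq_zero_iff]

/-- the intersection ring of `(M[D_n], D_t)` is
`ℤ[D_n][D₁]/(D₁^n − D_n) = ℤ[q][D₁]/(D₁^n − q)` (the small quantum cohomology ring of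
`ℙ^{n-1}`): the evaluation `ℤ[q][D₁] → M`, `P(q, D₁) ↦ P(D_n, D₁)·ε^1`, is surjective
with kernel exactly the ideal generated by `D₁^n − q`. -/
theorem intersection_ring_of_quantum_projective_space (n : ℕ) (hn : 1 ≤ n) :
    Function.Surjective (evalQ1 n) ∧
    (∀ φ : MvPolynomial (Fin 2) ℤ,
        evalQ1 n φ = 0 ↔
          φ ∈ Ideal.span {MvPolynomial.X 1 ^ n - MvPolynomial.X 0}) :=
  intersection_ring_of_quantum_projective_space_general n

end
end
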